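/- Let W_Y and W_Z be BI-DMCs such that W_Z is degraded with respect to W_Y via a channel W_{Z|Y}, i.e., W_Z(z|x) = Σ_y W_Y(y|x)·W_{Z|Y}(z|y). Then: (i) the PPM super channels of order m = 2^q satisfy W̃_Z(z̃|x_{1:q}) = Σ_{ỹ} W̃_Y(ỹ|x_{1:q})·W_{Z|Y}^{⊗m}(z̃|ỹ) for all x_{1:q}, z̃, i.e., the super channel of W_Z is degraded with respect to the super channel of W_Y; and (ii) with X_1,…,X_q i.i.d. uniform bits, for each level i the conditional pmf of (Z̃, X_{i+1:q}) given X_i satisfies W_{Z̃,X_{i+1:q}|X_i}(z̃, x_{i+1:q} | x_i) = Σ_{ỹ} W_{Z|Y}^{⊗m}(z̃|ỹ)·W_{Ỹ,X_{i+1:q}|X_i}(ỹ, x_{i+1:q} | x_i), i.e., each level channel of Willie is degraded with respect to the corresponding level channel of Bob. -/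

import Mathlib

open Finset

def IsPMF {𝒵 : Type} [Fintype 𝒵] (P : 𝒵 → ℝ) : Prop :=
  (∀ z, 0 ≤ P z) ∧ ∑ z, P z = 1

def dIdx (q : ℕ) (x : Fin q → Bool) : ℕ :=
  ∑ j : Fin q, if x j then 2^(j:ℕ) else 0

lemma sum_two_pow (q : ℕ) : ∑ j ∈ Finset.range q, 2^j = 2^q - 1 := by
  induction q with
  | zero => simp
  | succ q ih =>
    rw [Finset.sum_range_succ, ih, pow_succ]
    have : 0 < 2^q := pow_pos (by norm_num) q
    omega

lemma dIdx_lt (q : ℕ) (x : Fin q → Bool) : dIdx q x < 2^q := by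
  have h1 : dIdx q x ≤ ∑ j : Fin q, 2^(j:ℕ) := by
    apply Finset.sum_le_sum
    intro j _
    split <;> simp
  have h2 : ∑ j : Fin q, 2^(j:ℕ) = 2^q - 1 := by
    rw [Fin.sum_univ_eq_sum_range (fun j => 2^j) q, sum_two_pow]
  have : 0 < 2^q := pow_pos (by norm_num) q
  omega

def ppmPos (q : ℕ) (x : Fin q → Bool) : Fin (2^q) := ⟨dIdx q x, dIdx_lt q x⟩

noncomputable def superCh {𝒴 : Type} [Fintype 𝒴] [DecidableEq 𝒴] (W : Bool → 𝒴 → ℝ)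
    (q : ℕ) (x : Fin q → Bool) (yt : Fin (2^q) → 𝒴) : ℝ :=
  W true (yt (ppmPos q x)) * ∏ h ∈ univ.erase (ppmPos q x), W false (yt h)

noncomputable def condOut {𝒴 : Type} [Fintype 𝒴] [DecidableEq 𝒴] (W : Bool → 𝒴 → ℝ)
    (q : ℕ) (S : Finset (Fin q)) (x : Fin q → Bool) (yt : Fin (2^q) → 𝒴) : ℝ :=
  ((2:ℝ)^S.card)⁻¹ * ∑ xs : {i : Fin q // i ∈ S} → Bool,
    superCh W q (fun i => if h : i ∈ S then xs ⟨i, h⟩ else x i) yt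

noncomputable def infoDen {𝒴 : Type} [Fintype 𝒴] [DecidableEq 𝒴] (W : Bool → 𝒴 → ℝ)
    (q : ℕ) (A B : Finset (Fin q)) : ℝ :=
  ∑ x : Fin q → Bool, ∑ yt : Fin (2^q) → 𝒴,
    ((2:ℝ)^q)⁻¹ * superCh W q x yt * Real.log (condOut W q A x yt / condOut W q B x yt)

noncomputable def infoDen2 {𝒴 : Type} [Fintype 𝒴] [DecidableEq 𝒴] (W : Bool → 𝒴 → ℝ)
    (q : ℕ) (A B : Finset (Fin q)) : ℝ :=
  ∑ x : Fin q → Bool, ∑ yt : Fin (2^q) → 𝒴,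
    ((2:ℝ)^q)⁻¹ * superCh W q x yt * Real.logb 2 (condOut W q A x yt / condOut W q B x yt)

noncomputable def ind (P : Prop) : ℝ := @ite ℝ P (Classical.propDecidable P) 1 0

noncomputable def levelCh {𝒴 : Type} [Fintype 𝒴] [DecidableEq 𝒴] (W : Bool → 𝒴 → ℝ)
    (q : ℕ) (i : Fin q) (xi : Bool) (xtail : {t : Fin q // i < t} → Bool)
    (yt : Fin (2^q) → 𝒴) : ℝ :=
  ((2:ℝ)^(q-1))⁻¹ * ∑ xhead : {t : Fin q // t < i} → Bool,
    superCh W q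
      (fun t => if h : t < i then xhead ⟨t, h⟩ else if h' : i < t then xtail ⟨t, h'⟩ else xi)
      yt

/-!
The PPM super channel is the memoryless extension `W^{⊗m}` evaluated at the input word with a single
`1` in position `d(x)`. Memoryless extension commutes with composition of channels (a product of
sums is a sum of products), so degradation of `W_Z` transfers to the super channels. A level
channel is an average of super channel values over the unobserved input bits, and composing with a
fixed channel is linear, so degradation passes to the level channels as well.
-/

lemma superCh_eq_prod {𝒴 : Type} [Fintype 𝒴] [DecidableEq 𝒴] (W : Bool → 𝒴 → ℝ)
    (q : ℕ) (x : Fin q → Bool) (yt : Fin (2^q) → 𝒴) :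
    superCh W q x yt = ∏ h, W (decide (h = ppmPos q x)) (yt h) := by
  rw [superCh, ← mul_prod_erase univ _ (mem_univ (ppmPos q x)), decide_eq_true rfl]
  congr 1
  refine prod_congr rfl fun h hh => ?_
  rw [decide_eq_false (ne_of_mem_erase hh)]

lemma prod_sum_mul_eq_sum_prod_mul {R ι 𝒴 𝒵 : Type*} [CommSemiring R] [Fintype ι] [DecidableEq ι]
    [Fintype 𝒴] (A : ι → 𝒴 → R) (B : 𝒴 → 𝒵 → R) (zt : ι → 𝒵) :
    ∏ h, ∑ y, A h y * B y (zt h) = ∑ yt : ι → 𝒴, (∏ h, A h (yt h)) * ∏ h, B (yt h) (zt h) := by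
  simp_rw [Fintype.prod_sum, prod_mul_distrib]

section Degraded

variable {𝒴 𝒵 : Type} [Fintype 𝒴] [Fintype 𝒵] [DecidableEq 𝒴] [DecidableEq 𝒵]
  {WY : Bool → 𝒴 → ℝ} {WZ : Bool → 𝒵 → ℝ} {Wdeg : 𝒴 → 𝒵 → ℝ}

lemma superCh_eq_sum_of_degraded (hdeg : ∀ x z, WZ x z = ∑ y, WY x y * Wdeg y z)
    (q : ℕ) (x : Fin q → Bool) (zt : Fin (2^q) → 𝒵) :
    superCh WZ q x zt = ∑ yt : Fin (2^q) → 𝒴, superCh WY q x yt * ∏ h, Wdeg (yt h) (zt h) := by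
  simp_rw [superCh_eq_prod, hdeg]
  exact prod_sum_mul_eq_sum_prod_mul _ _ _

lemma levelCh_eq_sum_of_degraded (hdeg : ∀ x z, WZ x z = ∑ y, WY x y * Wdeg y z)
    (q : ℕ) (i : Fin q) (xi : Bool) (xtail : {t : Fin q // i < t} → Bool)
    (zt : Fin (2^q) → 𝒵) :
    levelCh WZ q i xi xtail zt
      = ∑ yt : Fin (2^q) → 𝒴, (∏ h, Wdeg (yt h) (zt h)) * levelCh WY q i xi xtail yt := by
  simp_rw [levelCh, superCh_eq_sum_of_degraded hdeg, mul_sum]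
  rw [sum_comm]
  refine sum_congr rfl fun yt _ => sum_congr rfl fun xhead _ => ?_
  ring

end Degraded

theorem stmt13_general {𝒴 𝒵 : Type} [Fintype 𝒴] [Fintype 𝒵] [DecidableEq 𝒴] [DecidableEq 𝒵]
    (q : ℕ)
    (WY : Bool → 𝒴 → ℝ) (WZ : Bool → 𝒵 → ℝ)
    (Wdeg : 𝒴 → 𝒵 → ℝ)
    (hdeg : ∀ x z, WZ x z = ∑ y, WY x y * Wdeg y z) :
    (∀ (x : Fin q → Bool) (zt : Fin (2^q) → 𝒵),
      superCh WZ q x zt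
        = ∑ yt : Fin (2^q) → 𝒴, superCh WY q x yt * ∏ h, Wdeg (yt h) (zt h)) ∧
    (∀ (i : Fin q) (xi : Bool) (xtail : {t : Fin q // i < t} → Bool)
        (zt : Fin (2^q) → 𝒵),
      levelCh WZ q i xi xtail zt
        = ∑ yt : Fin (2^q) → 𝒴, (∏ h, Wdeg (yt h) (zt h)) * levelCh WY q i xi xtail yt) :=
  ⟨superCh_eq_sum_of_degraded hdeg q, levelCh_eq_sum_of_degraded hdeg q⟩

/-- If Willie's channel `WZ` is degraded with respect to Bob's channel `WY` via
`Wdeg`, then (i) the PPM super channel of `WZ` is degraded with respect to the PPM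
super channel of `WY` via the memoryless extension `Wdeg^{⊗m}`, and (ii) each level
channel of Willie is degraded with respect to the corresponding level channel of Bob. -/
theorem stmt13 {𝒴 𝒵 : Type} [Fintype 𝒴] [Fintype 𝒵] [DecidableEq 𝒴] [DecidableEq 𝒵]
    (q : ℕ)
    (WY : Bool → 𝒴 → ℝ) (WZ : Bool → 𝒵 → ℝ)
    (hWY : ∀ x, IsPMF (WY x)) (hWZ : ∀ x, IsPMF (WZ x))
    (Wdeg : 𝒴 → 𝒵 → ℝ) (hWdeg : ∀ y, IsPMF (Wdeg y))
    (hdeg : ∀ x z, WZ x z = ∑ y, WY x y * Wdeg y z) :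
    (∀ (x : Fin q → Bool) (zt : Fin (2^q) → 𝒵),
      superCh WZ q x zt
        = ∑ yt : Fin (2^q) → 𝒴, superCh WY q x yt * ∏ h, Wdeg (yt h) (zt h)) ∧
    (∀ (i : Fin q) (xi : Bool) (xtail : {t : Fin q // i < t} → Bool)
        (zt : Fin (2^q) → 𝒵),
      levelCh WZ q i xi xtail zt
        = ∑ yt : Fin (2^q) → 𝒴, (∏ h, Wdeg (yt h) (zt h)) * levelCh WY q i xi xtail yt) :=
  stmt13_general q WY WZ Wdeg hdeg
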